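/- (Single step of Lemma 1.) Let g_1,…,g_N ≥ 0, a_1,…,a_{N-1} > 0, E_1 > 0, and noise powers σ_1²,…,σ_N² > 0. For 1 ≤ n ≤ N define the n-hop end-to-end SNR γ_n = (∏_{i=1}^{n-1} a_i · ∏_{i=1}^{n} g_i · E_1) / (Σ_{j=1}^{n-1} (∏_{i=j}^{n-1} a_i g_{i+1}) σ_j² + σ_n²). Then for every 1 ≤ n ≤ N−1, γ_{n+1} ≤ γ_n. -/

import Mathlib

/-!
Let `P` and `D` be the signal and noise powers of the `n`-hop link and `c = a n * g (n + 1)` the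
gain of hop `n + 1`. That hop scales both by `c` and then adds its own noise, so
`γ (n + 1) = c P / (c D + σ2 (n + 1)) ≤ c P / (c D) = P / D = γ n` (and `γ (n + 1) = 0` if `c = 0`).
-/

open Finset

theorem mul_div_mul_add_le_div {x c d s : ℝ} (hx : 0 ≤ x) (hc : 0 ≤ c) (hd : 0 < d)
    (hs : 0 ≤ s) : c * x / (c * d + s) ≤ x / d := by
  rcases (add_nonneg (mul_nonneg hc hd.le) hs).eq_or_lt with h | h
  · rw [← h, div_zero]
    positivity
  · rw [div_le_div_iff₀ h hd]
    nlinarith [mul_nonneg hx hs]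

namespace MultihopAF

def signal (a g : ℕ → ℝ) (E1 : ℝ) (n : ℕ) : ℝ :=
  (∏ i ∈ Icc 1 (n - 1), a i) * (∏ i ∈ Icc 1 n, g i) * E1

def noise (a g σ2 : ℕ → ℝ) (n : ℕ) : ℝ :=
  (∑ j ∈ Icc 1 (n - 1), (∏ i ∈ Icc j (n - 1), a i * g (i + 1)) * σ2 j) + σ2 n

variable {a g σ2 : ℕ → ℝ} {E1 : ℝ} {n : ℕ}

theorem signal_succ (hn : 1 ≤ n) :
    signal a g E1 (n + 1) = a n * g (n + 1) * signal a g E1 n := by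
  obtain ⟨m, rfl⟩ : ∃ m, n = m + 1 := ⟨n - 1, by omega⟩
  simp only [signal, Nat.add_sub_cancel]
  rw [prod_Icc_succ_top (by omega : 1 ≤ m + 1), prod_Icc_succ_top (by omega : 1 ≤ m + 1 + 1)]
  ring

theorem noise_succ (hn : 1 ≤ n) :
    noise a g σ2 (n + 1) = a n * g (n + 1) * noise a g σ2 n + σ2 (n + 1) := by
  obtain ⟨m, rfl⟩ : ∃ m, n = m + 1 := ⟨n - 1, by omega⟩
  have hprod : ∀ j ∈ Icc 1 m, ∏ i ∈ Icc j (m + 1), a i * g (i + 1) =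
      a (m + 1) * g (m + 1 + 1) * ∏ i ∈ Icc j m, a i * g (i + 1) := fun j hj => by
    rw [prod_Icc_succ_top (by simp only [mem_Icc] at hj; omega), mul_comm]
  simp only [noise, Nat.add_sub_cancel]
  rw [sum_Icc_succ_top (by omega : 1 ≤ m + 1), sum_congr rfl fun j hj => by rw [hprod j hj],
    Icc_self, prod_singleton]
  simp only [mul_assoc, ← mul_sum]
  ring

theorem signal_nonneg (ha : ∀ i ∈ Icc 1 (n - 1), 0 ≤ a i) (hg : ∀ i ∈ Icc 1 n, 0 ≤ g i)
    (hE1 : 0 ≤ E1) : 0 ≤ signal a g E1 n :=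
  mul_nonneg (mul_nonneg (prod_nonneg ha) (prod_nonneg hg)) hE1

theorem noise_pos (ha : ∀ i ∈ Icc 1 (n - 1), 0 ≤ a i) (hg : ∀ i ∈ Icc 1 n, 0 ≤ g i)
    (hσ : ∀ j ∈ Icc 1 (n - 1), 0 ≤ σ2 j) (hσn : 0 < σ2 n) : 0 < noise a g σ2 n := by
  refine add_pos_of_nonneg_of_pos (sum_nonneg fun j hj => mul_nonneg ?_ (hσ j hj)) hσn
  refine prod_nonneg fun i hi => mul_nonneg (ha i ?_) (hg (i + 1) ?_) <;>
    simp only [mem_Icc] at hi hj ⊢ <;> omega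

noncomputable def snr (a g σ2 : ℕ → ℝ) (E1 : ℝ) (n : ℕ) : ℝ := signal a g E1 n / noise a g σ2 n

theorem snr_succ_le (hn : 1 ≤ n) (ha : ∀ i ∈ Icc 1 n, 0 ≤ a i)
    (hg : ∀ i ∈ Icc 1 (n + 1), 0 ≤ g i) (hE1 : 0 ≤ E1) (hσ : ∀ j ∈ Icc 1 (n + 1), 0 ≤ σ2 j)
    (hσn : 0 < σ2 n) : snr a g σ2 E1 (n + 1) ≤ snr a g σ2 E1 n := by
  have hsub : Icc 1 (n - 1) ⊆ Icc 1 n := Icc_subset_Icc_right (Nat.sub_le n 1)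
  have hsub' : Icc 1 n ⊆ Icc 1 (n + 1) := Icc_subset_Icc_right n.le_succ
  have hsignal : 0 ≤ signal a g E1 n :=
    signal_nonneg (fun i hi => ha i (hsub hi)) (fun i hi => hg i (hsub' hi)) hE1
  have hnoise : 0 < noise a g σ2 n :=
    noise_pos (fun i hi => ha i (hsub hi)) (fun i hi => hg i (hsub' hi))
      (fun j hj => hσ j (hsub' (hsub hj))) hσn
  have hgain : 0 ≤ a n * g (n + 1) :=
    mul_nonneg (ha n (right_mem_Icc.2 hn)) (hg (n + 1) (right_mem_Icc.2 (by omega)))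
  rw [snr, snr, signal_succ hn, noise_succ hn]
  exact mul_div_mul_add_le_div hsignal hgain hnoise (hσ (n + 1) (right_mem_Icc.2 (by omega)))

end MultihopAF

open MultihopAF in
/-- single step of Lemma 1: the n-hop end-to-end SNR is nonincreasing
in the number of hops, one step at a time: `γ (n+1) ≤ γ n` for `1 ≤ n ≤ N-1`. -/
theorem multihop_AF_snr_step_monotone
    (N : ℕ) (g a σ2 : ℕ → ℝ) (E1 : ℝ)
    (hg : ∀ i ∈ Finset.Icc 1 N, 0 ≤ g i)
    (ha : ∀ i ∈ Finset.Icc 1 (N - 1), 0 < a i)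
    (hE1 : 0 < E1)
    (hσ : ∀ j ∈ Finset.Icc 1 N, 0 < σ2 j)
    (γ : ℕ → ℝ)
    (hγ : ∀ n ∈ Finset.Icc 1 N,
      γ n = ((∏ i ∈ Finset.Icc 1 (n - 1), a i) * (∏ i ∈ Finset.Icc 1 n, g i) * E1) /
        ((∑ j ∈ Finset.Icc 1 (n - 1),
            (∏ i ∈ Finset.Icc j (n - 1), a i * g (i + 1)) * σ2 j) + σ2 n)) :
    ∀ n, 1 ≤ n → n ≤ N - 1 → γ (n + 1) ≤ γ n := by
  intro n hn hnN
  have hsub : ∀ {k}, k ≤ N → Icc 1 k ⊆ Icc 1 N := Icc_subset_Icc_right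
  have hn_mem : n ∈ Icc 1 N := mem_Icc.2 ⟨hn, by omega⟩
  have hsucc_mem : n + 1 ∈ Icc 1 N := mem_Icc.2 ⟨by omega, by omega⟩
  rw [hγ (n + 1) hsucc_mem, hγ n hn_mem]
  exact snr_succ_le hn (fun i hi => (ha i (Icc_subset_Icc_right hnN hi)).le)
    (fun i hi => hg i (hsub (by omega) hi)) hE1.le
    (fun j hj => (hσ j (hsub (by omega) hj)).le) (hσ n hn_mem)
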